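/- Consider the scalar ODE x'(t) = (1/8)·(2π²)^{2/3}·x(t)^{−1/3}·(−3x(t)⁴ + x(t)² + 2) on (0, ∞). Note that −3x⁴ + x² + 2 = (1 − x²)(3x² + 2), so x ≡ 1 is the unique positive constant solution. For every initial value x(0) = ε with ε > 0, the maximal solution is defined on all of [0, ∞), remains in the interval between ε and 1 (inclusive), and satisfies x(t) → 1 as t → ∞. -/

import Mathlib

open Real Filter Set Topology
open scoped ENNReal

/-- The right-hand side of the scalar ODE obtained by restricting the normalized
spinor-flow system (case `aμ = -1`) to the curve of volume-one Berger metrics. -/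
noncomputable def f2 (x : ℝ) : ℝ :=
  (1/8) * (2 * π^2) ^ ((2:ℝ)/3) * x ^ (-(1:ℝ)/3) * (-3*x^4 + x^2 + 2)

/-- `x` is a solution of `x' = f2(x)` on `J`, with values in `(0, ∞)`. -/
def IsSolutionOn (x : ℝ → ℝ) (J : Set ℝ) : Prop :=
  ∀ t ∈ J, 0 < x t ∧ HasDerivAt x (f2 (x t)) t

/-- The interval `[0, T)` as a subset of `ℝ`, where `T ∈ (0,∞]`. -/
def domainUpTo (T : ℝ≥0∞) : Set ℝ := {t : ℝ | 0 ≤ t ∧ ENNReal.ofReal t < T}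

/-- `x` is a maximal solution on `[0, T)`: it is a solution there and cannot be
extended to a solution on a strictly larger interval to the right. -/
def IsMaxSolution (x : ℝ → ℝ) (T : ℝ≥0∞) : Prop :=
  0 < T ∧ IsSolutionOn x (domainUpTo T) ∧
    ¬ ∃ (T' : ℝ≥0∞) (x' : ℝ → ℝ), T < T' ∧ IsSolutionOn x' (domainUpTo T') ∧
        ∀ t ∈ domainUpTo T, x' t = x t

/-! Since `f2 x` has the sign of `1 - x` for `x > 0`, a positive solution can cross neither the
equilibrium `1` nor its own initial level in the wrong direction: it stays between its initial value
and `1` and is monotone. A bounded monotone solution has a limit at a finite endpoint of its domain,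
from which Picard–Lindelöf continues it, so maximal solutions are global. At infinity the limit `L`
satisfies `f2 L = 0`, since otherwise the derivative would stay away from zero; hence `L = 1`. -/

theorem exists_pos_f2_eq_mul {y : ℝ} (hy : 0 < y) : ∃ c > 0, f2 y = c * (1 - y ^ 2) :=
  ⟨(1/8) * (2 * π^2) ^ ((2:ℝ)/3) * y ^ (-(1:ℝ)/3) * (3 * y^2 + 2), by positivity,
    by unfold f2; ring⟩

theorem f2_nonneg {y : ℝ} (hy : 0 < y) (hy1 : y ≤ 1) : 0 ≤ f2 y := by
  obtain ⟨c, hc, hf⟩ := exists_pos_f2_eq_mul hy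
  rw [hf]
  exact mul_nonneg hc.le (by nlinarith)

theorem f2_nonpos {y : ℝ} (hy1 : 1 ≤ y) : f2 y ≤ 0 := by
  obtain ⟨c, hc, hf⟩ := exists_pos_f2_eq_mul (zero_lt_one.trans_le hy1)
  rw [hf]
  exact mul_nonpos_of_nonneg_of_nonpos hc.le (by nlinarith)

theorem f2_eq_zero_iff {y : ℝ} (hy : 0 < y) : f2 y = 0 ↔ y = 1 := by
  obtain ⟨c, hc, hf⟩ := exists_pos_f2_eq_mul hy
  rw [hf, mul_eq_zero, or_iff_right hc.ne', sub_eq_zero, eq_comm,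
    pow_eq_one_iff_of_nonneg hy.le two_ne_zero]

theorem contDiffAt_f2 {y : ℝ} (hy : 0 < y) : ContDiffAt ℝ 1 f2 y :=
  (contDiffAt_const.mul (Real.contDiffAt_rpow_const_of_ne hy.ne')).mul (by fun_prop)

theorem isSolutionOn_const_iff {c : ℝ} (hc : 0 < c) {J : Set ℝ} (hJ : J.Nonempty) :
    IsSolutionOn (fun _ => c) J ↔ c = 1 := by
  refine ⟨fun h => ?_, ?_⟩
  · obtain ⟨t, ht⟩ := hJ
    exact (f2_eq_zero_iff hc).1 ((h t ht).2.unique (hasDerivAt_const t c))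
  · rintro rfl t -
    exact ⟨one_pos, ((f2_eq_zero_iff one_pos).2 rfl).symm ▸ hasDerivAt_const t 1⟩

theorem domainUpTo_ofReal (r : ℝ) : domainUpTo (ENNReal.ofReal r) = Ico 0 r := by
  ext t
  simp only [domainUpTo, mem_ofPred_eq, mem_Ico, ENNReal.ofReal_lt_ofReal_iff']
  constructor
  · rintro ⟨ht, htr, -⟩; exact ⟨ht, htr⟩
  · rintro ⟨ht, htr⟩; exact ⟨ht, htr, ht.trans_lt htr⟩

theorem domainUpTo_top : domainUpTo ⊤ = Ici 0 := by
  ext t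
  simp [domainUpTo]

theorem image_le_of_deriv_right_nonpos_above {f f' : ℝ → ℝ} {a b c : ℝ}
    (hf : ContinuousOn f (Icc a b)) (hf' : ∀ t ∈ Ico a b, HasDerivWithinAt f (f' t) (Ici t) t)
    (ha : f a ≤ c) (hc : ∀ t ∈ Ico a b, c < f t → f' t ≤ 0) :
    ∀ ⦃t⦄, t ∈ Icc a b → f t ≤ c := by
  intro t ht
  refine le_of_forall_pos_le_add fun ε hε => ?_
  have hlen : 0 < t - a + 1 := by linarith [ht.1]
  set δ := ε / (t - a + 1)
  have hδ : 0 < δ := div_pos hε hlen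
  -- the barrier `c + δ (s - a + 1)` lies strictly above `c`, where `f` cannot increase
  have hbarrier := image_le_of_deriv_right_lt_deriv_boundary (B := fun s => c + δ * (s - a + 1))
    (B' := fun _ => δ) hf hf' (by simpa using ha.trans (le_add_of_nonneg_right hδ.le))
    (fun s => by
      simpa using (((hasDerivAt_id s).sub_const a).add_const 1).const_mul δ |>.const_add c)
    (fun s hs hfs => (hc s hs (by nlinarith [hs.1])).trans_lt hδ) ht
  calc f t ≤ c + δ * (t - a + 1) := hbarrier
    _ = c + ε := by rw [div_mul_cancel₀ ε hlen.ne']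

theorem le_image_of_deriv_right_nonneg_below {f f' : ℝ → ℝ} {a b c : ℝ}
    (hf : ContinuousOn f (Icc a b)) (hf' : ∀ t ∈ Ico a b, HasDerivWithinAt f (f' t) (Ici t) t)
    (ha : c ≤ f a) (hc : ∀ t ∈ Ico a b, f t < c → 0 ≤ f' t) :
    ∀ ⦃t⦄, t ∈ Icc a b → c ≤ f t := fun _ ht =>
  neg_le_neg_iff.1 <| image_le_of_deriv_right_nonpos_above (f := -f) (f' := -f') hf.neg
    (fun s hs => (hf' s hs).neg) (neg_le_neg ha)
    (fun s hs h => neg_nonpos.2 (hc s hs (neg_lt_neg_iff.1 h))) ht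

theorem eq_zero_of_tendsto_of_tendsto_deriv_atTop {f f' : ℝ → ℝ} {L m : ℝ}
    (hf : ∀ᶠ t in atTop, HasDerivAt f (f' t) t) (hfL : Tendsto f atTop (𝓝 L))
    (hf'm : Tendsto f' atTop (𝓝 m)) : m = 0 := by
  have hincr : Tendsto (fun t => f (t + 1) - f t) atTop (𝓝 (L - L)) :=
    (hfL.comp (tendsto_atTop_add_const_right _ 1 tendsto_id)).sub hfL
  -- by the mean value theorem, `f (t + 1) - f t` is a value of `f'` on `(t, t + 1)`
  have hmvt : Tendsto (fun t => f (t + 1) - f t) atTop (𝓝 m) := by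
    rw [Metric.tendsto_atTop] at hf'm ⊢
    intro ε hε
    obtain ⟨N, hN⟩ := hf'm ε hε
    obtain ⟨N', hN'⟩ := eventually_atTop.1 hf
    refine ⟨max N N', fun t ht => ?_⟩
    have hderiv : ∀ s ∈ Icc t (t + 1), HasDerivAt f (f' s) s :=
      fun s hs => hN' s ((le_max_right _ _).trans (ht.trans hs.1))
    obtain ⟨ξ, hξ, hslope⟩ := exists_hasDerivAt_eq_slope f f' (lt_add_one t)
      (fun s hs => (hderiv s hs).continuousAt.continuousWithinAt)
      (fun s hs => hderiv s (Ioo_subset_Icc_self hs))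
    rw [add_sub_cancel_left, div_one] at hslope
    rw [← hslope]
    exact hN ξ ((le_max_left _ _).trans (ht.trans hξ.1.le))
  simpa using tendsto_nhds_unique hmvt hincr

theorem exists_mem_Icc_tendsto_nhdsLT {f : ℝ → ℝ} {a b m M : ℝ} (hab : a < b)
    (hf : MonotoneOn f (Ioo a b) ∨ AntitoneOn f (Ioo a b)) (hmaps : MapsTo f (Ioo a b) (Icc m M)) :
    ∃ L ∈ Icc m M, Tendsto f (𝓝[<] b) (𝓝 L) := by
  suffices ∃ L, Tendsto f (𝓝[<] b) (𝓝 L) by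
    obtain ⟨L, hL⟩ := this
    exact ⟨L, isClosed_Icc.mem_of_tendsto hL (mem_of_superset (Ioo_mem_nhdsLT hab) hmaps), hL⟩
  have hne : (Ioo a b).Nonempty := nonempty_Ioo.2 hab
  rcases hf with hf | hf
  · exact ⟨_, hf.tendsto_nhdsWithin_Ioo_left hne ⟨M, by rintro _ ⟨t, ht, rfl⟩; exact (hmaps ht).2⟩⟩
  · exact ⟨_, hf.tendsto_nhdsWithin_Ioo_left hne ⟨m, by rintro _ ⟨t, ht, rfl⟩; exact (hmaps ht).1⟩⟩

theorem exists_mem_Icc_tendsto_atTop {f : ℝ → ℝ} {a m M : ℝ}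
    (hf : MonotoneOn f (Ici a) ∨ AntitoneOn f (Ici a)) (hmaps : MapsTo f (Ici a) (Icc m M)) :
    ∃ L ∈ Icc m M, Tendsto f atTop (𝓝 L) := by
  suffices ∃ L, Tendsto (fun t : Ici a => f t) atTop (𝓝 L) by
    obtain ⟨L, hL⟩ := this
    rw [tendsto_comp_val_Ici_atTop] at hL
    exact ⟨L, isClosed_Icc.mem_of_tendsto hL (mem_of_superset (Ici_mem_atTop a) hmaps), hL⟩
  rcases hf with hf | hf
  · exact ⟨_, tendsto_atTop_ciSup (fun s t hst => hf s.2 t.2 hst)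
      ⟨M, by rintro _ ⟨t, rfl⟩; exact (hmaps t.2).2⟩⟩
  · exact ⟨_, tendsto_atTop_ciInf (fun s t hst => hf s.2 t.2 hst)
      ⟨m, by rintro _ ⟨t, rfl⟩; exact (hmaps t.2).1⟩⟩

theorem hasDerivWithinAt_Iic_of_eventually_hasDerivAt_comp {F y : ℝ → ℝ} {b : ℝ}
    (hF : ContinuousAt F (y b)) (hy : ∀ᶠ t in 𝓝[<] b, HasDerivAt y (F (y t)) t)
    (hcont : ContinuousWithinAt y (Iio b) b) : HasDerivWithinAt y (F (y b)) (Iic b) b := by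
  have hs : Iio b ∩ {t | HasDerivAt y (F (y t)) t} ∈ 𝓝[<] b := inter_mem self_mem_nhdsWithin hy
  refine hasDerivWithinAt_Iic_of_tendsto_deriv
    (fun t ht => ht.2.differentiableAt.differentiableWithinAt) (hcont.mono inter_subset_left) hs ?_
  refine (hF.tendsto.comp hcont).congr' ?_
  filter_upwards [hs] with t ht
  rw [Function.comp_apply, ht.2.deriv]

theorem exists_eqOn_Iio_hasDerivAt_of_tendsto_nhdsLT {F x : ℝ → ℝ} {b L : ℝ}
    (hF : ContDiffAt ℝ 1 F L) (hx : ∀ᶠ t in 𝓝[<] b, HasDerivAt x (F (x t)) t)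
    (hlim : Tendsto x (𝓝[<] b) (𝓝 L)) :
    ∃ y : ℝ → ℝ, EqOn y x (Iio b) ∧ y b = L ∧ ∀ᶠ t in 𝓝 b, HasDerivAt y (F (y t)) t := by
  obtain ⟨z, hzb, δ, hδ, hz⟩ :=
    hF.exists_forall_mem_closedBall_exists_eq_forall_mem_Ioo_hasDerivAt₀ b
  set y : ℝ → ℝ := fun t => if t < b then x t else z t
  have hyx : EqOn y x (Iio b) := fun t ht => if_pos ht
  have hyz : EqOn y z (Ici b) := fun t ht => if_neg (not_lt.2 ht)
  have hyb : y b = L := (hyz self_mem_Ici).trans hzb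
  have hleft : ∀ᶠ t in 𝓝[<] b, HasDerivAt y (F (y t)) t := by
    filter_upwards [hx, self_mem_nhdsWithin] with t ht htb
    have heq := hyx.eventuallyEq_of_mem (Iio_mem_nhds htb)
    rw [heq.eq_of_nhds]
    exact ht.congr_of_eventuallyEq heq
  have hright : ∀ᶠ t in 𝓝[>] b, HasDerivAt y (F (y t)) t := by
    filter_upwards [Ioo_mem_nhdsGT (lt_add_of_pos_right b hδ)] with t ht
    have heq := hyz.eventuallyEq_of_mem (Ici_mem_nhds ht.1)
    rw [heq.eq_of_nhds]
    exact (hz t ⟨by linarith [ht.1], ht.2⟩).congr_of_eventuallyEq heq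
  have hIic : HasDerivWithinAt y (F (y b)) (Iic b) b := by
    refine hasDerivWithinAt_Iic_of_eventually_hasDerivAt_comp (hyb ▸ hF.continuousAt) hleft ?_
    rw [ContinuousWithinAt, hyb]
    exact hlim.congr' (hyx.symm.eventuallyEq_of_mem self_mem_nhdsWithin)
  have hIci : HasDerivWithinAt y (F (y b)) (Ici b) b := by
    have hzb' := (hz b ⟨by linarith, by linarith⟩).hasDerivWithinAt (s := Ici b)
    rw [hzb, ← hyb] at hzb'
    exact hzb'.congr hyz (hyz self_mem_Ici)
  have hb : HasDerivAt y (F (y b)) b := by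
    rw [← hasDerivWithinAt_univ, ← Iic_union_Ici]
    exact hIic.union hIci
  refine ⟨y, hyx, hyb, ?_⟩
  rw [← nhdsNE_sup_pure, ← nhdsLT_sup_nhdsGT]
  exact eventually_sup.2 ⟨eventually_sup.2 ⟨hleft, hright⟩, hb⟩

section Solutions

variable {x : ℝ → ℝ}

theorem IsSolutionOn.mem_uIcc {D : Set ℝ} [OrdConnected D] (hsol : IsSolutionOn x D) {s t : ℝ}
    (hs : s ∈ D) (ht : t ∈ D) (hst : s ≤ t) : x t ∈ uIcc (x s) 1 := by
  have hsub : Icc s t ⊆ D := Set.Icc_subset D hs ht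
  have hcont : ContinuousOn x (Icc s t) :=
    fun u hu => (hsol u (hsub hu)).2.continuousAt.continuousWithinAt
  have hderiv : ∀ u ∈ Ico s t, HasDerivWithinAt x (f2 (x u)) (Ici u) u :=
    fun u hu => (hsol u (hsub (Ico_subset_Icc_self hu))).2.hasDerivWithinAt
  have hpos : ∀ u ∈ Ico s t, 0 < x u := fun u hu => (hsol u (hsub (Ico_subset_Icc_self hu))).1
  exact ⟨le_image_of_deriv_right_nonneg_below hcont hderiv inf_le_left
      (fun u hu h => f2_nonneg (hpos u hu) (h.le.trans inf_le_right)) ⟨hst, le_rfl⟩,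
    image_le_of_deriv_right_nonpos_above hcont hderiv le_sup_left
      (fun u hu h => f2_nonpos (le_sup_right.trans h.le)) ⟨hst, le_rfl⟩⟩

theorem IsSolutionOn.mapsTo_uIcc {D : Set ℝ} [OrdConnected D] (hsol : IsSolutionOn x D) {a : ℝ}
    (ha : IsLeast D a) : MapsTo x D (uIcc (x a) 1) :=
  fun _ ht => hsol.mem_uIcc ha.1 ht (ha.2 ht)

theorem IsSolutionOn.monotoneOn_or_antitoneOn {D : Set ℝ} [OrdConnected D]
    (hsol : IsSolutionOn x D) {a : ℝ} (ha : IsLeast D a) : MonotoneOn x D ∨ AntitoneOn x D := by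
  rcases le_total (x a) 1 with h | h
  · refine Or.inl fun s hs t ht hst => ?_
    have hs1 : x s ≤ 1 := (uIcc_of_le h ▸ hsol.mapsTo_uIcc ha hs).2
    exact (uIcc_of_le hs1 ▸ hsol.mem_uIcc hs ht hst).1
  · refine Or.inr fun s hs t ht hst => ?_
    have hs1 : 1 ≤ x s := (uIcc_of_ge h ▸ hsol.mapsTo_uIcc ha hs).1
    exact (uIcc_of_ge hs1 ▸ hsol.mem_uIcc hs ht hst).2

theorem IsSolutionOn.exists_tendsto_nhdsLT {a b : ℝ} (hsol : IsSolutionOn x (Ico a b))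
    (hab : a < b) : ∃ L > 0, Tendsto x (𝓝[<] b) (𝓝 L) := by
  have ha : IsLeast (Ico a b) a := isLeast_Ico hab
  obtain ⟨L, hL, hlim⟩ := exists_mem_Icc_tendsto_nhdsLT hab
    ((hsol.monotoneOn_or_antitoneOn ha).imp (·.mono Ioo_subset_Ico_self)
      (·.mono Ioo_subset_Ico_self))
    ((hsol.mapsTo_uIcc ha).mono_left Ioo_subset_Ico_self)
  exact ⟨L, (lt_inf_iff.2 ⟨(hsol a ha.1).1, one_pos⟩).trans_le hL.1, hlim⟩

theorem IsSolutionOn.exists_extension {a b L : ℝ} (hsol : IsSolutionOn x (Ico a b)) (hab : a < b)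
    (hL : 0 < L) (hlim : Tendsto x (𝓝[<] b) (𝓝 L)) :
    ∃ b' > b, ∃ y : ℝ → ℝ, IsSolutionOn y (Ico a b') ∧ EqOn y x (Ico a b) := by
  obtain ⟨y, hyx, hyb, hy⟩ := exists_eqOn_Iio_hasDerivAt_of_tendsto_nhdsLT (contDiffAt_f2 hL)
    (mem_of_superset (Ico_mem_nhdsLT hab) fun t ht => (hsol t ht).2) hlim
  have hnear : ∀ᶠ t in 𝓝 b, 0 < y t ∧ HasDerivAt y (f2 (y t)) t :=
    (hy.self_of_nhds.continuousAt.eventually (lt_mem_nhds (hyb ▸ hL))).and hy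
  obtain ⟨b', hbb', hIco⟩ := mem_nhdsGE_iff_exists_Ico_subset.1 (nhdsWithin_le_nhds hnear)
  refine ⟨b', hbb', y, fun t ht => ?_, fun t ht => hyx ht.2⟩
  rcases lt_or_ge t b with htb | hbt
  · have heq := hyx.eventuallyEq_of_mem (Iio_mem_nhds htb)
    rw [heq.eq_of_nhds]
    exact ⟨(hsol t ⟨ht.1, htb⟩).1, (hsol t ⟨ht.1, htb⟩).2.congr_of_eventuallyEq heq⟩
  · exact hIco ⟨hbt, ht.2⟩

theorem IsSolutionOn.tendsto_atTop_one {a : ℝ} (hsol : IsSolutionOn x (Ici a)) :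
    Tendsto x atTop (𝓝 1) := by
  obtain ⟨L, hL, hlim⟩ := exists_mem_Icc_tendsto_atTop
    (hsol.monotoneOn_or_antitoneOn isLeast_Ici) (hsol.mapsTo_uIcc isLeast_Ici)
  have hL0 : 0 < L := (lt_inf_iff.2 ⟨(hsol a self_mem_Ici).1, one_pos⟩).trans_le hL.1
  have hderiv : Tendsto (fun t => f2 (x t)) atTop (𝓝 (f2 L)) :=
    (contDiffAt_f2 hL0).continuousAt.tendsto.comp hlim
  have hf2L := eq_zero_of_tendsto_of_tendsto_deriv_atTop
    (mem_of_superset (Ici_mem_atTop a) fun t ht => (hsol t ht).2) hlim hderiv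
  rwa [(f2_eq_zero_iff hL0).1 hf2L] at hlim

theorem IsMaxSolution.eq_top {T : ℝ≥0∞} (hmax : IsMaxSolution x T) : T = ⊤ := by
  obtain ⟨hT, hsol, hmaximal⟩ := hmax
  by_contra hT'
  have hb : 0 < T.toReal := ENNReal.toReal_pos hT.ne' hT'
  have hD : domainUpTo T = Ico 0 T.toReal := by
    rw [← domainUpTo_ofReal, ENNReal.ofReal_toReal hT']
  rw [hD] at hsol
  obtain ⟨L, hL, hlim⟩ := hsol.exists_tendsto_nhdsLT hb
  obtain ⟨b', hb', y, hy, hyx⟩ := hsol.exists_extension hb hL hlim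
  refine hmaximal ⟨ENNReal.ofReal b', y, (ENNReal.lt_ofReal_iff_toReal_lt hT').2 hb', ?_, ?_⟩
  · rwa [domainUpTo_ofReal]
  · rwa [hD]

end Solutions

/-- For the scalar ODE `x' = (1/8)(2π²)^(2/3) x^(-1/3)(-3x⁴ + x² + 2)` on `(0, ∞)`:
one has `-3x⁴ + x² + 2 = (1 - x²)(3x² + 2)`, so `x ≡ 1` is the unique positive constant
solution; and every maximal solution with initial value `ε > 0` exists for all time,
stays in the closed interval between `ε` and `1`, and converges to `1`. -/
theorem scalar_ode_amu_neg_one :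
    (∀ x : ℝ, -3*x^4 + x^2 + 2 = (1 - x^2) * (3*x^2 + 2)) ∧
    (∀ c : ℝ, 0 < c → (IsSolutionOn (fun _ => c) Set.univ ↔ c = 1)) ∧
    ∀ ε : ℝ, 0 < ε → ∀ (x : ℝ → ℝ) (T : ℝ≥0∞), IsMaxSolution x T → x 0 = ε →
      T = ⊤ ∧ (∀ t : ℝ, 0 ≤ t → x t ∈ Set.uIcc ε 1) ∧ Tendsto x atTop (𝓝 1) := by
  refine ⟨fun y => by ring, fun c hc => isSolutionOn_const_iff hc univ_nonempty,
    fun ε _ x T hmax hx0 => ?_⟩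
  have hT : T = ⊤ := hmax.eq_top
  have hsol : IsSolutionOn x (Ici 0) := by
    rw [← domainUpTo_top, ← hT]
    exact hmax.2.1
  exact ⟨hT, fun t ht => hx0 ▸ hsol.mapsTo_uIcc isLeast_Ici ht, hsol.tendsto_atTop_one⟩
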